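/- arXiv:2111.08172 — 5 statements merged into one kernel-verified Lean document; each statement's English description precedes it below -/
import Mathlib

section
/- (Off-Policy Policy Gradient Theorem, finite case.) Suppose for all states s the value function satisfies the Bellman-type gradient recursion ∂v_π(s)/∂θ = g(s) + Σ_{s'} P_{π,γ}(s,s') ∂v_π(s')/∂θ, where g(s) = Σ_a (∂π(a|s;θ)/∂θ) q_π(s,a), and suppose (I - P_{π,γ}) is invertible. Then the gradient of the objective J_μ(θ) = Σ_s d_μ(s) i(s) v_π(s) equals Σ_s m(s) g(s), where m^T = (d_μ ⊙ i)^T (I - P_{π,γ})^{-1}. -/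
/-- **Off-Policy Policy Gradient Theorem (finite case).**
If the per-state value gradients `dv s` satisfy the Bellman-type recursion
`dv s = g s + ∑_{s'} P s s' • dv s'` and `I - P` is invertible, then the gradient of
the weighted-excursions objective `J_μ(θ) = ∑_s d_μ(s) i(s) v_π(s)`, namely
`∑_s (d_μ(s) i(s)) • dv s`, equals `∑_s m(s) • g s` where
`mᵀ = (d_μ ⊙ i)ᵀ (I - P)⁻¹`. -/
theorem offpolicy_policy_gradient_theorem
    {S : Type*} [Fintype S] [DecidableEq S] {n : ℕ}
    (P : Matrix S S ℝ) (dμ i : S → ℝ)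
    (g dv : S → (Fin n → ℝ))
    (hP : IsUnit (1 - P).det)
    (hrec : ∀ s : S, dv s = g s + ∑ s' : S, P s s' • dv s') :
    ∑ s : S, (dμ s * i s) • dv s
      = ∑ s : S, (Matrix.vecMul (fun s => dμ s * i s) (1 - P)⁻¹ s) • g s := by
  funext j
  set w : S → ℝ := fun s => dμ s * i s with hw
  set dvj : S → ℝ := fun s => dv s j with hdvj
  set gj : S → ℝ := fun s => g s j with hgj
  have hmv : (1 - P).mulVec dvj = gj := by
    funext s
    have h := congrArg (fun f => f j) (hrec s)
    simp only [Pi.add_apply, Finset.sum_apply, Pi.smul_apply, smul_eq_mul] at h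
    simp [Matrix.mulVec, dotProduct, Matrix.sub_apply, Matrix.one_apply,
      sub_mul, Finset.sum_sub_distrib, Finset.sum_ite_eq, hdvj, hgj]
    linarith [h]
  have hsolve : dvj = (1 - P)⁻¹.mulVec gj := by
    rw [← hmv, Matrix.mulVec_mulVec, Matrix.nonsing_inv_mul _ hP, Matrix.one_mulVec]
  have key : dotProduct w dvj = dotProduct (Matrix.vecMul w (1 - P)⁻¹) gj := by
    rw [hsolve, Matrix.dotProduct_mulVec]
  simpa [dotProduct, Finset.sum_apply, Pi.smul_apply, smul_eq_mul, hw, hdvj, hgj]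
    using key
end

section
/- If v_π satisfies v_π(s) = Σ_a π(a|s;θ) q_π(s,a) with q_π(s,a) = Σ_{s'} P(s'|s,a)[r(s,a,s') + γ(s,a,s') v_π(s')], then the matrix of gradients V̇ (rows indexed by states) satisfies V̇ = G + P_{π,γ} V̇, where row s of G is Σ_a (∂π(a|s;θ)/∂θ) q_π(s,a). Consequently, if (I - P_{π,γ}) is invertible, V̇ = (I - P_{π,γ})^{-1} G. -/
/-!
Differentiating the Bellman equation `v = ∑ₐ π q` by the product rule gives
`v̇(s) = ∑ₐ q(s,a) π̇(a|s) + ∑ₐ π(a|s) q̇(s,a)`, and since `r`, `P`, `γ` do not depend on `θ`,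
`q̇(s,a) = ∑_{s'} P(s'|s,a) γ(s,a,s') v̇(s')`. Collecting the second sum over `s'` yields
`V̇ = G + P_{π,γ} V̇`, a linear system for the rows of `V̇` which `(I - P_{π,γ})⁻¹` solves.
-/

open Finset

namespace Matrix

variable {S R E : Type*} [Fintype S] [AddCommGroup E]

lemma sum_mul_apply_smul [CommRing R] [Module R E] (M N : Matrix S S R) (x : S → E) (s : S) :
    ∑ s', (M * N) s s' • x s' = ∑ s', M s s' • ∑ s'', N s' s'' • x s'' := by
  simp only [mul_apply, sum_smul, smul_sum, mul_smul]
  exact sum_comm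

variable [DecidableEq S]

lemma sum_one_apply_smul [CommRing R] [Module R E] (x : S → E) (s : S) :
    ∑ s', (1 : Matrix S S R) s s' • x s' = x s := by
  simp [one_apply, ite_smul]

lemma sum_one_sub_apply_smul [CommRing R] [Module R E] (M : Matrix S S R) (x : S → E) (s : S) :
    ∑ s', (1 - M) s s' • x s' = x s - ∑ s', M s s' • x s' := by
  simp only [sub_apply, sub_smul, sum_sub_distrib, sum_one_apply_smul]

lemma eq_sum_inv_one_sub_smul_of_eq_add [CommRing R] [Module R E] (M : Matrix S S R)
    {x g : S → E} (hM : IsUnit (1 - M).det) (hx : ∀ s, x s = g s + ∑ s', M s s' • x s') (s : S) :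
    x s = ∑ s', (1 - M)⁻¹ s s' • g s' := by
  have hg : ∀ s, ∑ s', (1 - M) s s' • x s' = g s := fun s => by
    rw [sum_one_sub_apply_smul, hx s, add_sub_cancel_right]
  calc x s = ∑ s', ((1 - M)⁻¹ * (1 - M)) s s' • x s' := by
        rw [nonsing_inv_mul _ hM, sum_one_apply_smul]
    _ = ∑ s', (1 - M)⁻¹ s s' • g s' := by
        simp only [sum_mul_apply_smul, hg]

end Matrix

/-- The matrix `P_{π,γ}`. -/
def discountedTransition {S A : Type*} [Fintype A] (p : S → A → ℝ) (Pk γ : S → A → S → ℝ) :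
    Matrix S S ℝ :=
  Matrix.of fun s s' => ∑ a, p s a * Pk s a s' * γ s a s'

lemma discountedTransition_apply {S A : Type*} [Fintype A] (p : S → A → ℝ) (Pk γ : S → A → S → ℝ)
    (s s' : S) : discountedTransition p Pk γ s s' = ∑ a, p s a * Pk s a s' * γ s a s' :=
  rfl

section Gradient

variable {S A E : Type*} [Fintype S] [Fintype A] [NormedAddCommGroup E] [NormedSpace ℝ E]

lemma hasFDerivAt_expected_return {v : E → S → ℝ} {θ0 : E} (P r γ : S → ℝ)
    (hv : ∀ s, DifferentiableAt ℝ (fun θ => v θ s) θ0) :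
    HasFDerivAt (fun θ => ∑ s, P s * (r s + γ s * v θ s))
      (∑ s, (P s * γ s) • fderiv ℝ (fun θ => v θ s) θ0) θ0 := by
  refine HasFDerivAt.fun_sum fun s _ => ?_
  rw [← smul_smul]
  exact (((hv s).hasFDerivAt.const_mul (γ s)).const_add (r s)).const_mul (P s)

lemma fderiv_value_eq_add_discountedTransition_smul {π q : E → S → A → ℝ} {v : E → S → ℝ}
    {Pk r γ : S → A → S → ℝ} {θ0 : E}
    (hπ : ∀ s a, DifferentiableAt ℝ (fun θ => π θ s a) θ0)
    (hv : ∀ s, DifferentiableAt ℝ (fun θ => v θ s) θ0)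
    (hq : ∀ θ s a, q θ s a = ∑ s', Pk s a s' * (r s a s' + γ s a s' * v θ s'))
    (hval : ∀ θ s, v θ s = ∑ a, π θ s a * q θ s a) (s : S) :
    fderiv ℝ (fun θ => v θ s) θ0 =
      (∑ a, q θ0 s a • fderiv ℝ (fun θ => π θ s a) θ0)
        + ∑ s', discountedTransition (π θ0) Pk γ s s' • fderiv ℝ (fun θ => v θ s') θ0 := by
  have hq' : ∀ a, HasFDerivAt (fun θ => q θ s a)
      (∑ s', (Pk s a s' * γ s a s') • fderiv ℝ (fun θ => v θ s') θ0) θ0 := fun a => by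
    simpa only [hq] using hasFDerivAt_expected_return (Pk s a) (r s a) (γ s a) hv
  have hv' := HasFDerivAt.fun_sum (u := univ) fun a _ => (hπ s a).hasFDerivAt.fun_mul (hq' a)
  rw [show (fun θ => v θ s) = _ from funext fun θ => hval θ s, hv'.fderiv, sum_add_distrib,
    add_comm]
  congr 1
  simp only [discountedTransition_apply, smul_sum, sum_smul, smul_smul, mul_assoc]
  exact sum_comm

end Gradient

/-- **Bellman recursion for the matrix of value gradients.**
If `v θ s = ∑_a π θ s a * q θ s a` with
`q θ s a = ∑_{s'} P(s'|s,a) (r(s,a,s') + γ(s,a,s') v θ s')`, and `π`, `v` are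
differentiable in `θ`, then the gradients satisfy the recursion
`V̇(s) = G(s) + ∑_{s'} P_{π,γ}(s,s') V̇(s')` where `G(s) = ∑_a q(s,a) ∂π(a|s;θ)/∂θ`,
and if `I - P_{π,γ}` is invertible then `V̇ = (I - P_{π,γ})⁻¹ G`. -/
theorem value_gradient_matrix_recursion
    {S A : Type*} [Fintype S] [Fintype A] [DecidableEq S] {n : ℕ}
    (π : (Fin n → ℝ) → S → A → ℝ) (v : (Fin n → ℝ) → S → ℝ)
    (q : (Fin n → ℝ) → S → A → ℝ)
    (Pk : S → A → S → ℝ) (r γ : S → A → S → ℝ) (θ0 : Fin n → ℝ)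
    (hπ : ∀ s a, DifferentiableAt ℝ (fun θ => π θ s a) θ0)
    (hv : ∀ s, DifferentiableAt ℝ (fun θ => v θ s) θ0)
    (hq : ∀ θ s a, q θ s a = ∑ s' : S, Pk s a s' * (r s a s' + γ s a s' * v θ s'))
    (hval : ∀ θ s, v θ s = ∑ a : A, π θ s a * q θ s a)
    (hinv : IsUnit (1 - Matrix.of (fun s s' : S =>
        ∑ a : A, π θ0 s a * Pk s a s' * γ s a s')).det) :
    (∀ s : S, fderiv ℝ (fun θ => v θ s) θ0 =
        (∑ a : A, q θ0 s a • fderiv ℝ (fun θ => π θ s a) θ0)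
        + ∑ s' : S, (∑ a : A, π θ0 s a * Pk s a s' * γ s a s') •
            fderiv ℝ (fun θ => v θ s') θ0) ∧
    (∀ s : S, fderiv ℝ (fun θ => v θ s) θ0 =
        ∑ s' : S, ((1 - Matrix.of (fun s s' : S =>
            ∑ a : A, π θ0 s a * Pk s a s' * γ s a s'))⁻¹ s s') •
          (∑ a : A, q θ0 s' a • fderiv ℝ (fun θ => π θ s' a) θ0)) := by
  have hrec := fderiv_value_eq_add_discountedTransition_smul hπ hv hq hval
  exact ⟨hrec, Matrix.eq_sum_inv_one_sub_smul_of_eq_add _ hinv hrec⟩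
end

section
/- (Entropy-regularized off-policy policy gradient theorem.) Under the same conditions as the unregularized case, ∂J̃_μ(θ)/∂θ = Σ_s m(s) Σ_a (∂π(a|s;θ)/∂θ) [ q̃_π(s,a) - τ log π(a|s;θ) ], where m^T = (d_μ ⊙ i)^T (I - P_{π,γ})^{-1}. -/
/-- **Entropy-regularized off-policy policy gradient theorem (finite case).**
If the gradients `dv s` of the entropy-regularized values satisfy the corresponding
Bellman recursion
`dv s = (∑_a (q̃(s,a) - τ log π(a|s;θ)) • dπ(s,a)) + ∑_{s'} P_{π,γ}(s,s') • dv s'`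
and `I - P_{π,γ}` is invertible, then
`∂J̃_μ(θ)/∂θ = ∑_s m(s) ∑_a (∂π(a|s;θ)/∂θ) [q̃(s,a) - τ log π(a|s;θ)]` with
`mᵀ = (d_μ ⊙ i)ᵀ (I - P_{π,γ})⁻¹`, where `∂J̃_μ/∂θ = ∑_s (d_μ(s) i(s)) • dv s`. -/
theorem entropy_regularized_offpolicy_pg
    {S A : Type*} [Fintype S] [Fintype A] [DecidableEq S] {n : ℕ}
    (P : Matrix S S ℝ) (dμ i : S → ℝ) (τ : ℝ)
    (πp qtil : S → A → ℝ) (dπ : S → A → (Fin n → ℝ))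
    (dv : S → (Fin n → ℝ))
    (hτ : 0 < τ) (hπpos : ∀ s a, 0 < πp s a)
    (hP : IsUnit (1 - P).det)
    (hrec : ∀ s : S, dv s =
        (∑ a : A, (qtil s a - τ * Real.log (πp s a)) • dπ s a)
        + ∑ s' : S, P s s' • dv s') :
    ∑ s : S, (dμ s * i s) • dv s
      = ∑ s : S, (Matrix.vecMul (fun s => dμ s * i s) (1 - P)⁻¹ s) •
          ∑ a : A, (qtil s a - τ * Real.log (πp s a)) • dπ s a := by
  set g : S → (Fin n → ℝ) :=
    fun s => ∑ a : A, (qtil s a - τ * Real.log (πp s a)) • dπ s a with hg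
  funext j
  have key : ∀ j : Fin n,
      (1 - P).mulVec (fun s => dv s j) = fun s => g s j := by
    intro j
    funext s
    have h := congrFun (hrec s) j
    simp only [Matrix.mulVec, dotProduct, Matrix.sub_apply, Matrix.one_apply,
      sub_mul, Finset.sum_sub_distrib, ite_mul, one_mul, zero_mul,
      Finset.sum_ite_eq, Finset.mem_univ, if_true]
    have h2 : (∑ s' : S, P s s' • dv s') j = ∑ s' : S, P s s' * dv s' j := by
      simp [Finset.sum_apply]
    simp only [Pi.add_apply] at h
    rw [h, h2]
    ring
  have hdv : ∀ j : Fin n, (fun s => dv s j) = (1 - P)⁻¹.mulVec (fun s => g s j) := by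
    intro j
    rw [← key j, Matrix.mulVec_mulVec, Matrix.nonsing_inv_mul _ hP, Matrix.one_mulVec]
  have lhs : (∑ s : S, (dμ s * i s) • dv s) j
      = dotProduct (fun s => dμ s * i s) (fun s => dv s j) := by
    simp [Finset.sum_apply, dotProduct]
  rw [lhs, hdv j, Matrix.dotProduct_mulVec]
  simp only [dotProduct, Finset.sum_apply, Pi.smul_apply, smul_eq_mul, hg]
end

section
/- (Implicit weighting of the semi-gradient in the counterexample.) In the three-state MDP with start state s_0 transitioning to s_1 with probability π(a_0|s_0)=p and to s_2 with probability 1-p (terminating thereafter), with behaviour policy taking a_0 with probability b, the unique state weighting d satisfying d^T(I-P_{π,γ})^{-1} = d_μ^T is d(s_0) = 0.5, d(s_1) = 0.5(b - p), d(s_2) = 0.5(p - b). In particular, if b ≠ p, exactly one of d(s_1), d(s_2) is strictly negative. -/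
/-- **Implicit weighting of the semi-gradient in the three-state counterexample.**
In the three-state MDP (start state `s₀ = 0` transitioning to `s₁ = 1` with
probability `p` and to `s₂ = 2` with probability `1 - p`, terminating thereafter),
with behaviour probability `b` of `a₀` so `d_μ = (1/2, b/2, (1-b)/2)`, the unique
state weighting `d` whose emphatic weighting `m_d` (given by `m_d(s₀) = d(s₀)`,
`m_d(s₁) = d(s₁) + p·m_d(s₀)`, `m_d(s₂) = d(s₂) + (1-p)·m_d(s₀)`) equals `d_μ` is
`d = (1/2, (b-p)/2, (p-b)/2)`; if `b ≠ p` then exactly one of `d(s₁), d(s₂)` is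
strictly negative. -/
theorem semi_gradient_implicit_weighting (b p : ℝ) :
    (∀ d : Fin 3 → ℝ,
      (d 0 = 1/2 ∧ d 1 + p * d 0 = (1/2) * b ∧ d 2 + (1 - p) * d 0 = (1/2) * (1 - b))
        ↔ d = ![1/2, (1/2) * (b - p), (1/2) * (p - b)]) ∧
    (b ≠ p → Xor' ((1/2) * (b - p) < 0) ((1/2) * (p - b) < 0)) := by
  constructor
  · intro d
    constructor
    · rintro ⟨h0, h1, h2⟩
      funext i
      fin_cases i <;> simp_all <;> linarith
    · rintro rfl
      refine ⟨rfl, ?_, ?_⟩ <;> simp <;> ring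
  · intro h
    rcases lt_or_gt_of_ne h with hlt | hgt
    · exact Or.inl ⟨by linarith, not_lt.mpr (by linarith)⟩
    · exact Or.inr ⟨by linarith, not_lt.mpr (by linarith)⟩
end

section
/- (Incompatibility of stationarity conditions in the counterexample.) For τ > 0, τ ≠ τ_i where τ_i ≈ 0.2779 is the unique positive solution of (1 - τ log 3)/3 = (exp(0.25/τ)+1)^{-1}, there is no p ∈ (0,1) satisfying both τ log 3 + 3p - 1 = 0 and -0.25 + τ log((1-p)/p) = 0 simultaneously. Equivalently, the two curves p = (1 - τ log 3)/3 and p = 1/(exp(0.25/τ)+1) intersect at exactly one value of τ > 0. -/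
/-!
Both stationarity conditions determine `p` from `τ`: the first gives `p = (1 - τ log 3)/3`,
the second inverts to the logistic value `p = (exp (1/(4τ)) + 1)⁻¹`. Hence a common solution
exists only where the two curves meet. Their difference is strictly decreasing in `τ` (an
affine decreasing term minus an increasing logistic term), positive at `τ = 1/8` and negative
at `τ = 1`, so by the intermediate value theorem it vanishes exactly once.
-/

open Real Set

theorem StrictAntiOn.existsUnique_eq_zero {f : ℝ → ℝ} {s : Set ℝ} {a b : ℝ}
    (hf : StrictAntiOn f s) (hab : a ≤ b) (hsub : Icc a b ⊆ s) (hcont : ContinuousOn f (Icc a b))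
    (ha : 0 < f a) (hb : f b < 0) : ∃! x, x ∈ s ∧ f x = 0 := by
  obtain ⟨x, hx, hfx⟩ := intermediate_value_Icc' hab hcont ⟨hb.le, ha.le⟩
  exact ⟨x, ⟨hsub hx, hfx⟩, fun y ⟨hy, hfy⟩ => hf.injOn hy (hsub hx) (hfy.trans hfx.symm)⟩

theorem strictMonoOn_inv_exp_div_add_one {c : ℝ} (hc : 0 < c) :
    StrictMonoOn (fun τ : ℝ => (exp (c / τ) + 1)⁻¹) (Ioi 0) := by
  intro a ha b _ hab
  apply inv_strictAnti₀ (by positivity)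
  gcongr

theorem continuousOn_inv_exp_div_add_one (c : ℝ) :
    ContinuousOn (fun τ : ℝ => (exp (c / τ) + 1)⁻¹) (Ioi 0) := by
  refine ContinuousOn.inv₀ ?_ fun τ _ => by positivity
  exact (continuousOn_const.div continuousOn_id fun _ hτ => hτ.ne').rexp.add
    continuousOn_const

theorem eq_inv_exp_div_add_one_of_mul_log {τ c p : ℝ} (hτ : τ ≠ 0) (hp₀ : 0 < p) (hp₁ : p < 1)
    (h : τ * log ((1 - p) / p) = c) : p = (exp (c / τ) + 1)⁻¹ := by
  have hlog : log ((1 - p) / p) = c / τ := by rw [← h, mul_div_cancel_left₀ _ hτ]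
  rw [← hlog, exp_log (div_pos (by linarith) hp₀)]
  field_simp
  ring

noncomputable def stationarityGap (τ : ℝ) : ℝ :=
  (1 - τ * log 3) / 3 - (exp ((1 / 4) / τ) + 1)⁻¹

theorem strictAntiOn_stationarityGap : StrictAntiOn stationarityGap (Ioi 0) := by
  intro a ha b hb hab
  have hlog : 0 < log 3 := log_pos (by norm_num)
  have := strictMonoOn_inv_exp_div_add_one (by norm_num : (0 : ℝ) < 1 / 4) ha hb hab
  unfold stationarityGap
  nlinarith

theorem continuousOn_stationarityGap : ContinuousOn stationarityGap (Ioi 0) :=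
  ((continuous_const.sub (continuous_id.mul continuous_const)).div_const 3).continuousOn.sub
    (continuousOn_inv_exp_div_add_one _)

theorem stationarityGap_one_eighth_pos : 0 < stationarityGap (1 / 8) := by
  have hexp : (4 : ℝ)⁻¹ ≥ (exp 2 + 1)⁻¹ := by
    gcongr
    linarith [add_one_le_exp 2]
  have := log_three_lt_d9
  unfold stationarityGap
  norm_num at hexp ⊢
  linarith

theorem stationarityGap_one_neg : stationarityGap 1 < 0 := by
  have := log_three_gt_d9
  have : 0 < (exp ((1 / 4) / 1) + 1)⁻¹ := by positivity
  unfold stationarityGap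
  linarith

/-- **Incompatibility of stationarity conditions in the counterexample.**
The curves `τ ↦ (1 - τ log 3)/3` and `τ ↦ (exp(0.25/τ) + 1)⁻¹` intersect at exactly
one `τ > 0` (namely `τ_i ≈ 0.2779`), and for any `τ > 0` at which they do not
intersect, no `p ∈ (0,1)` satisfies both stationarity conditions
`τ log 3 + 3p - 1 = 0` and `-0.25 + τ log((1-p)/p) = 0` simultaneously. -/
theorem counterexample_incompatible_stationarity :
    (∃! τ : ℝ, 0 < τ ∧
        (1 - τ * Real.log 3) / 3 = (Real.exp ((1/4) / τ) + 1)⁻¹) ∧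
    (∀ τ : ℝ, 0 < τ →
      (1 - τ * Real.log 3) / 3 ≠ (Real.exp ((1/4) / τ) + 1)⁻¹ →
      ∀ p : ℝ, 0 < p → p < 1 →
        ¬(τ * Real.log 3 + 3 * p - 1 = 0 ∧
          -(1/4) + τ * Real.log ((1 - p) / p) = 0)) := by
  constructor
  · have hsub : Icc (1 / 8 : ℝ) 1 ⊆ Ioi 0 := fun τ hτ => lt_of_lt_of_le (by norm_num) hτ.1
    simpa [stationarityGap, sub_eq_zero] using
      strictAntiOn_stationarityGap.existsUnique_eq_zero (by norm_num) hsub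
        (continuousOn_stationarityGap.mono hsub)
        stationarityGap_one_eighth_pos stationarityGap_one_neg
  · rintro τ hτ hne p hp₀ hp₁ ⟨haffine, hlogistic⟩
    refine hne ?_
    rw [← eq_inv_exp_div_add_one_of_mul_log hτ.ne' hp₀ hp₁ (by linarith)]
    linarith
end
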